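/- Let t be an SL₂-tiling with no entry equal to 1, i.e. t(i,j) ≥ 2 for all i, j. Then t has a unique minimal entry: there exists exactly one pair of integers (b,v) such that t(b,v) ≤ t(i,j) for all integers i, j; equivalently, there exists a pair (b,v) with t(b,v) < t(i,j) for all (i,j) ≠ (b,v). -/

import Mathlib

/-!
With all entries at least `2`, horizontally adjacent entries differ (two equal neighbours `x`
would give `x ∣ 1`), and each `2 × 2` relation forces a pair of adjacent columns to be ordered
the same way in every row. A column exceeding both of its neighbours is their sum: vertically
adjacent entries are coprime, so each entry of the column divides the sum of its neighbours,
which lies strictly between `0` and twice the entry. Erasing such a column leaves an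
`SL₂`-tiling. If two minima lay in columns `v < v'`, the columns would increase after `v` and
decrease before `v'`, so a peak column lies in between; erasing it moves the minima closer, and
induction on `v' - v` gives a contradiction. Transposing the tiling handles rows.
-/

/-- An `SL₂`-tiling: all entries are `≥ 1` and every adjacent `2×2` minor is `1`. -/
def IsSL2Tiling (t : ℤ → ℤ → ℤ) : Prop :=
  (∀ i j, 1 ≤ t i j) ∧
  (∀ i j, t i j * t (i+1) (j+1) - t i (j+1) * t (i+1) j = 1)

theorem Int.exists_and_not_succ_of_le {P : ℤ → Prop} {v w : ℤ} (hv : P v) (hw : ¬ P w)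
    (hvw : v ≤ w) : ∃ c, v ≤ c ∧ c < w ∧ P c ∧ ¬ P (c + 1) := by
  have hvw' : v < w := lt_of_le_of_ne hvw (by rintro rfl; exact hw hv)
  obtain ⟨c, ⟨hcw, hc⟩, hgreatest⟩ :=
    Int.exists_greatest_of_bdd (P := fun j => j < w ∧ P j) ⟨w, fun j hj => hj.1.le⟩ ⟨v, hvw', hv⟩
  refine ⟨c, hgreatest v ⟨hvw', hv⟩, hcw, hc, fun hc1 => ?_⟩
  rcases (Int.add_one_le_of_lt hcw).lt_or_eq with h | h
  · exact absurd (hgreatest (c + 1) ⟨h, hc1⟩) (by omega)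
  · exact hw (h ▸ hc1)

theorem Int.exists_forall_le_of_lower_bound {α β : Type*} [Nonempty α] [Nonempty β]
    {t : α → β → ℤ} {m : ℤ} (h : ∀ i j, m ≤ t i j) : ∃ b v, ∀ i j, t b v ≤ t i j := by
  obtain ⟨_, ⟨b, v, rfl⟩, hleast⟩ := Int.exists_least_of_bdd (P := fun n => ∃ i j, t i j = n)
    ⟨m, by rintro _ ⟨i, j, rfl⟩; exact h i j⟩
    ⟨t (Classical.arbitrary α) (Classical.arbitrary β), _, _, rfl⟩
  exact ⟨b, v, fun i j => hleast _ ⟨i, j, rfl⟩⟩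

theorem Int.lt_iff_lt_of_mul_sub_mul_eq_one {a b c d : ℤ} (ha : 0 ≤ a) (hb : 2 ≤ b) (hc : 0 ≤ c)
    (h : a * d - b * c = 1) : a < b ↔ c < d := by
  constructor
  · intro hab
    by_contra! hdc
    nlinarith [mul_le_mul_of_nonneg_left hdc ha, mul_le_mul_of_nonneg_right hab.le hc]
  · intro hcd
    by_contra! hba
    nlinarith [mul_le_mul_of_nonneg_right hba (hc.trans hcd.le)]

def eraseCol (t : ℤ → ℤ → ℤ) (c : ℤ) : ℤ → ℤ → ℤ :=
  fun i j => t i (if j < c then j else j + 1)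

namespace IsSL2Tiling

variable {t : ℤ → ℤ → ℤ}

theorem transpose (ht : IsSL2Tiling t) : IsSL2Tiling fun i j => t j i :=
  ⟨fun i j => ht.1 j i, fun i j => by linarith [ht.2 j i]⟩

theorem eq_one_of_eq_succ_col (ht : IsSL2Tiling t) {i j : ℤ} (h : t i j = t i (j + 1)) :
    t i j = 1 := by
  have hdet := ht.2 i j
  rw [← h] at hdet
  exact Int.eq_one_of_dvd_one (by linarith [ht.1 i j])
    ⟨t (i + 1) (j + 1) - t (i + 1) j, by linear_combination -hdet⟩

theorem eq_add_of_peak (ht : IsSL2Tiling t) {i j : ℤ} (hl : t i (j - 1) < t i j)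
    (hr : t i (j + 1) < t i j) : t i j = t i (j - 1) + t i (j + 1) := by
  have hdet := ht.2 i (j - 1)
  rw [sub_add_cancel] at hdet
  have hcop : IsCoprime (t i j) (t (i + 1) j) :=
    ⟨-t (i + 1) (j - 1), t i (j - 1), by linear_combination hdet⟩
  have hdvd : t i j ∣ (t i (j - 1) + t i (j + 1)) * t (i + 1) j :=
    ⟨t (i + 1) (j - 1) + t (i + 1) (j + 1), by linear_combination hdet - ht.2 i j⟩
  obtain ⟨k, hk⟩ := hcop.dvd_of_dvd_mul_right hdvd
  have hk1 : k = 1 := by nlinarith [ht.1 i (j - 1), ht.1 i (j + 1)]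
  rw [hk, hk1, mul_one]

theorem eraseCol (ht : IsSL2Tiling t) {c : ℤ} (hsum : ∀ i, t i c = t i (c - 1) + t i (c + 1)) :
    IsSL2Tiling (eraseCol t c) := by
  refine ⟨fun i j => ht.1 i _, fun i j => ?_⟩
  simp only [_root_.eraseCol]
  rcases lt_trichotomy (j + 1) c with h | h | h
  · rw [if_pos (by omega), if_pos h]
    exact ht.2 i j
  · rw [if_pos (by omega), if_neg (by omega), h]
    obtain rfl : j = c - 1 := by omega
    have hdet := ht.2 i (c - 1)
    rw [sub_add_cancel] at hdet
    linear_combination hdet - t i (c - 1) * hsum (i + 1) + t (i + 1) (c - 1) * hsum i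
  · rw [if_neg (by omega), if_neg (by omega)]
    exact ht.2 i (j + 1)

theorem ne_succ_col (ht : IsSL2Tiling t) (h2 : ∀ i j, 2 ≤ t i j) (i j : ℤ) :
    t i j ≠ t i (j + 1) := fun h => by
  linarith [ht.eq_one_of_eq_succ_col h, h2 i j]

theorem succ_col_lt_iff_not_lt (ht : IsSL2Tiling t) (h2 : ∀ i j, 2 ≤ t i j) (i j : ℤ) :
    t i (j + 1) < t i j ↔ ¬ t i j < t i (j + 1) :=
  ⟨lt_asymm, fun h => (ht.ne_succ_col h2 i j).symm.lt_of_le (not_lt.1 h)⟩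

theorem lt_succ_col_iff_succ_row (ht : IsSL2Tiling t) (h2 : ∀ i j, 2 ≤ t i j) (i j : ℤ) :
    t i j < t i (j + 1) ↔ t (i + 1) j < t (i + 1) (j + 1) :=
  Int.lt_iff_lt_of_mul_sub_mul_eq_one (by linarith [ht.1 i j]) (h2 i (j + 1))
    (by linarith [ht.1 (i + 1) j]) (ht.2 i j)

theorem lt_succ_col_iff (ht : IsSL2Tiling t) (h2 : ∀ i j, 2 ≤ t i j) (i k j : ℤ) :
    t i j < t i (j + 1) ↔ t k j < t k (j + 1) := by
  have hper : Function.Periodic (fun i => t i j < t i (j + 1)) 1 :=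
    fun i => propext (ht.lt_succ_col_iff_succ_row h2 i j).symm
  simpa using (hper.int_mul_eq i).trans (hper.int_mul_eq k).symm

theorem succ_col_lt_iff (ht : IsSL2Tiling t) (h2 : ∀ i j, 2 ≤ t i j) (i k j : ℤ) :
    t i (j + 1) < t i j ↔ t k (j + 1) < t k j := by
  rw [ht.succ_col_lt_iff_not_lt h2, ht.succ_col_lt_iff_not_lt h2, ht.lt_succ_col_iff h2 i k]

theorem lt_succ_col_of_isMin (ht : IsSL2Tiling t) (h2 : ∀ i j, 2 ≤ t i j) {b v : ℤ}
    (hmin : ∀ i j, t b v ≤ t i j) (i : ℤ) : t i v < t i (v + 1) :=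
  (ht.lt_succ_col_iff h2 b i v).1 ((hmin b (v + 1)).lt_of_ne (ht.ne_succ_col h2 b v))

theorem succ_col_lt_of_isMin (ht : IsSL2Tiling t) (h2 : ∀ i j, 2 ≤ t i j) {b v : ℤ}
    (hmin : ∀ i j, t b (v + 1) ≤ t i j) (i : ℤ) : t i (v + 1) < t i v :=
  (ht.succ_col_lt_iff h2 b i v).1 ((hmin b v).lt_of_ne' (ht.ne_succ_col h2 b v))

theorem col_le_of_isMin (ht : IsSL2Tiling t) (h2 : ∀ i j, 2 ≤ t i j) {b v b' v' : ℤ}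
    (hmin : ∀ i j, t b v ≤ t i j) (hmin' : ∀ i j, t b' v' ≤ t i j) : v' ≤ v := by
  by_contra! hlt
  obtain ⟨n, hn⟩ : ∃ n : ℕ, v' = v + 1 + n := ⟨(v' - v - 1).toNat, by omega⟩
  induction n generalizing t v' with
  | zero =>
    obtain rfl : v' = v + 1 := by simpa using hn
    exact lt_asymm (ht.lt_succ_col_of_isMin h2 hmin b') (ht.succ_col_lt_of_isMin h2 hmin' b')
  | succ n ih =>
    obtain ⟨w, rfl⟩ : ∃ w, v' = w + 1 := ⟨v' - 1, by ring⟩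
    obtain ⟨c, hvc, hcw, hc, hc1⟩ :=
      Int.exists_and_not_succ_of_le (P := fun j => t b j < t b (j + 1))
        (ht.lt_succ_col_of_isMin h2 hmin b) (lt_asymm (ht.succ_col_lt_of_isMin h2 hmin' b))
        (by omega)
    have hsum : ∀ i, t i (c + 1) = t i (c + 1 - 1) + t i (c + 1 + 1) := fun i =>
      ht.eq_add_of_peak (by rw [add_sub_cancel_right]; exact (ht.lt_succ_col_iff h2 b i c).1 hc)
        ((ht.succ_col_lt_iff h2 b i (c + 1)).1 ((ht.succ_col_lt_iff_not_lt h2 b (c + 1)).2 hc1))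
    refine ih (ht.eraseCol hsum) (fun i j => h2 i _) (fun i j => ?_) (v' := w) (fun i j => ?_)
      (by omega) (by omega)
    · simp only [_root_.eraseCol, if_pos (show v < c + 1 by omega)]
      exact hmin i _
    · simp only [_root_.eraseCol, if_neg (show ¬ w < c + 1 by omega)]
      exact hmin' i _

theorem eq_of_isMin (ht : IsSL2Tiling t) (h2 : ∀ i j, 2 ≤ t i j) {b v b' v' : ℤ}
    (hmin : ∀ i j, t b v ≤ t i j) (hmin' : ∀ i j, t b' v' ≤ t i j) : (b', v') = (b, v) := by
  have hcol : v' = v :=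
    le_antisymm (ht.col_le_of_isMin h2 hmin hmin') (ht.col_le_of_isMin h2 hmin' hmin)
  have h2t : ∀ i j, 2 ≤ t j i := fun i j => h2 j i
  have hrow : b' = b :=
    le_antisymm (ht.transpose.col_le_of_isMin h2t (fun i j => hmin j i) (fun i j => hmin' j i))
      (ht.transpose.col_le_of_isMin h2t (fun i j => hmin' j i) (fun i j => hmin j i))
  rw [hcol, hrow]

end IsSL2Tiling

theorem unique_minimum (t : ℤ → ℤ → ℤ) (ht : IsSL2Tiling t)
    (h2 : ∀ i j : ℤ, 2 ≤ t i j) :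
    (∃! bv : ℤ × ℤ, ∀ i j : ℤ, t bv.1 bv.2 ≤ t i j) ∧
    (∃ b v : ℤ, ∀ i j : ℤ, (i, j) ≠ (b, v) → t b v < t i j) := by
  obtain ⟨b, v, hmin⟩ := Int.exists_forall_le_of_lower_bound ht.1
  refine ⟨⟨(b, v), hmin, fun ⟨b', v'⟩ hmin' => ht.eq_of_isMin h2 hmin hmin'⟩, b, v,
    fun i j hne => (hmin i j).lt_of_ne fun heq => hne ?_⟩
  exact ht.eq_of_isMin h2 hmin fun i' j' => heq ▸ hmin i' j'
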